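/- arXiv:2603.26893 — 2 statements merged into one kernel-verified Lean document; each statement's English description precedes it below -/
import Mathlib

section
/- Let ℓ ∈ ℝ^n with 0 < ℓ(1) ≤ ℓ(2) ≤ ⋯ ≤ ℓ(n). The nested request sequence E = ((N_t, q_t))_{t∈[n]} with m = n online nodes, N_t = {t, t+1, …, n}, and q_t = ℓ(t) satisfies WF(E) = Hℓ and OPT(E) = ℓ, where H ∈ ℝ^{n×n} is the matrix H(i,j) = 1{i ≥ j}/(n − j + 1). -/
open Finset MeasureTheory

/-- A request sequence with `n` offline nodes and `m` online nodes: each online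
node `t` has a nonempty neighborhood `N t ⊆ [n]` and a positive quantity `q t`. -/
structure ReqSeq (n m : ℕ) where
  N : Fin m → Finset (Fin n)
  q : Fin m → ℝ
  N_nonempty : ∀ t, (N t).Nonempty
  q_pos : ∀ t, 0 < q t

/-- `Δ(N, q)`: feasible allocations for a single online node. -/
def allocSet (n : ℕ) (N : Finset (Fin n)) (qt : ℝ) : Set (Fin n → ℝ) :=
  {x | (∀ i, 0 ≤ x i) ∧ (∀ i, i ∉ N → x i = 0) ∧ ∑ i, x i = qt}

/-- A feasible allocation trajectory on a request sequence. -/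
def Feasible {n m : ℕ} (E : ReqSeq n m) (x : Fin m → Fin n → ℝ) : Prop :=
  ∀ t, x t ∈ allocSet n (E.N t) (E.q t)

/-- `Δ(E)`: the Minkowski sum of the per-node allocation sets (feasible load vectors). -/
def loads {n m : ℕ} (E : ReqSeq n m) : Set (Fin n → ℝ) :=
  {ℓ | ∃ x, Feasible E x ∧ ℓ = ∑ t, x t}

/-- Sum of the `k` largest entries of `x`. -/
noncomputable def topSum {n : ℕ} (x : Fin n → ℝ) (k : ℕ) : ℝ :=
  sSup ((fun s : Finset (Fin n) => ∑ i ∈ s, x i) '' {s | s.card = k})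

/-- `Majorizes x y` means `x ⪰ y`: equal total sums and every `k`-largest-entries
sum of `x` dominates that of `y`. -/
def Majorizes {n : ℕ} (x y : Fin n → ℝ) : Prop :=
  (∑ i, x i = ∑ i, y i) ∧ ∀ k ≤ n, topSum y k ≤ topSum x k

/-- `f` is Schur-concave on the nonnegative orthant: `x ⪯ y → f x ≥ f y`. -/
def SchurConcave {n : ℕ} (f : (Fin n → ℝ) → ℝ) : Prop :=
  ∀ x y : Fin n → ℝ, (∀ i, 0 ≤ x i) → (∀ i, 0 ≤ y i) → Majorizes y x → f y ≤ f x

/-- `g` is Schur-convex on the nonnegative orthant: `x ⪯ y → g x ≤ g y`. -/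
def SchurConvex {n : ℕ} (g : (Fin n → ℝ) → ℝ) : Prop :=
  ∀ x y : Fin n → ℝ, (∀ i, 0 ≤ x i) → (∀ i, 0 ≤ y i) → Majorizes y x → g x ≤ g y

/-- Cumulative load strictly before online node `t`. -/
def prevLoad {n m : ℕ} (x : Fin m → Fin n → ℝ) (t : Fin m) : Fin n → ℝ :=
  fun i => ∑ s ∈ Finset.univ.filter (fun s => s < t), x s i

/-- Minimum of `v` over the neighborhood of online node `t`. -/
noncomputable def reqMinOn {n m : ℕ} (E : ReqSeq n m) (t : Fin m) (v : Fin n → ℝ) : ℝ :=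
  (E.N t).inf' (E.N_nonempty t) v

/-- `x` is the water-filling allocation trajectory on `E`: at each arrival `t`,
`x t` maximizes the minimum post-allocation load over `N t`. -/
def IsWFAlloc {n m : ℕ} (E : ReqSeq n m) (x : Fin m → Fin n → ℝ) : Prop :=
  Feasible E x ∧
  ∀ t, ∀ y ∈ allocSet n (E.N t) (E.q t),
    reqMinOn E t (fun i => y i + prevLoad x t i) ≤ reqMinOn E t (fun i => x t i + prevLoad x t i)

-- The load vector produced by water-filling (via choice; the trajectory exists and is unique).
open Classical in
noncomputable def wfLoad {n m : ℕ} (E : ReqSeq n m) : Fin n → ℝ :=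
  if h : ∃ x, IsWFAlloc E x then ∑ t, h.choose t else 0

/-- `ℓ` is the majorization-minimal element of `Δ(E)`. -/
def IsOpt {n m : ℕ} (E : ReqSeq n m) (ℓ : Fin n → ℝ) : Prop :=
  ℓ ∈ loads E ∧ ∀ ℓ' ∈ loads E, Majorizes ℓ' ℓ

-- `OPT(E)`, the majorization-minimal feasible load vector (via choice).
open Classical in
noncomputable def optLoad {n m : ℕ} (E : ReqSeq n m) : Fin n → ℝ :=
  if h : ∃ ℓ, IsOpt E ℓ then h.choose else 0

/-- A request sequence is nested if `N 1 ⊇ N 2 ⊇ ⋯ ⊇ N m`. -/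
def IsNested {n m : ℕ} (E : ReqSeq n m) : Prop :=
  ∀ s t : Fin m, s ≤ t → E.N t ⊆ E.N s

/-- `E_{n,m,q}`: request sequences with total quantity `q`. -/
def seqs (n m : ℕ) (q : ℝ) : Set (ReqSeq n m) := {E | ∑ t, E.q t = q}

/-- The harmonic-series matrix applied to a vector: `(Hℓ)(i) = Σ_{j ≤ i} ℓ(j)/(n − j + 1)`
(in 1-indexed notation). -/
noncomputable def Hvec (n : ℕ) (ℓ : Fin n → ℝ) : Fin n → ℝ :=
  fun i => ∑ j ∈ Finset.univ.filter (fun j => j ≤ i), ℓ j / ((n - (j : ℕ) : ℕ) : ℝ)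

/-- The water-filling height of online node `t`: the common post-allocation load of
the offline nodes in the support of `x t`. -/
noncomputable def height {n m : ℕ} (x : Fin m → Fin n → ℝ) (t : Fin m) : ℝ :=
  sSup {c | ∃ i, 0 < x t i ∧ c = x t i + prevLoad x t i}

/-! On the triangular sequence the load left by nodes `s < t` is level on `{t, …, n}`, so by
induction water-filling splits every `q_t` evenly over its `n - t` neighbours, which is `Hℓ`.
Serving each `t` at offline node `t` realises `ℓ`; any feasible load puts all of `q_t` inside
every upper interval containing `t`, and monotonicity of `ℓ` makes these intervals its top-`k`
sets, so every feasible load majorizes `ℓ`. -/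

section Rearrangement

variable {ι M : Type*} [AddCommMonoid M] [LinearOrder M] [IsOrderedCancelAddMonoid M]

theorem Finset.sum_le_sum_of_card_eq_of_forall_le {s t : Finset ι} {f : ι → M}
    (hcard : #s = #t) (h : ∀ i ∈ s, ∀ j ∈ t, f i ≤ f j) :
    ∑ i ∈ s, f i ≤ ∑ j ∈ t, f j := by
  rcases t.eq_empty_or_nonempty with rfl | ht
  · simp_all
  refine (nsmul_le_nsmul_iff_right ht.card_pos.ne').mp ?_
  calc #t • ∑ i ∈ s, f i = ∑ i ∈ s, ∑ _j ∈ t, f i := by simp [Finset.smul_sum]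
    _ ≤ ∑ i ∈ s, ∑ j ∈ t, f j := sum_le_sum fun i hi => sum_le_sum fun j hj => h i hi j hj
    _ = #t • ∑ j ∈ t, f j := by rw [sum_const, hcard]

theorem Finset.sum_le_sum_of_monotone_of_isUpperSet [LinearOrder ι] {f : ι → M}
    (hf : Monotone f) {s t : Finset ι} (ht : IsUpperSet (t : Set ι)) (hcard : #s = #t) :
    ∑ i ∈ s, f i ≤ ∑ i ∈ t, f i := by
  have hsdiff : ∑ i ∈ s \ t, f i ≤ ∑ j ∈ t \ s, f j := by
    refine sum_le_sum_of_card_eq_of_forall_le (card_sdiff_eq_card_sdiff_iff.2 hcard) ?_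
    intro i hi j hj
    exact hf (le_of_not_ge fun hji => (mem_sdiff.1 hi).2 (ht hji (mem_sdiff.1 hj).1))
  rw [← sum_sdiff (inter_subset_left : s ∩ t ⊆ s), ← sum_sdiff (inter_subset_right : s ∩ t ⊆ t),
    sdiff_inter_self_left, sdiff_inter_self_right]
  exact add_le_add_left hsdiff _

end Rearrangement

theorem Fin.exists_isUpperSet_card_eq {n k : ℕ} (hk : k ≤ n) :
    ∃ t : Finset (Fin n), IsUpperSet (t : Set (Fin n)) ∧ #t = k := by
  refine ⟨({i | ¬ (i : ℕ) < n - k} : Finset (Fin n)), fun a b hab ha => ?_, ?_⟩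
  · simp only [coe_filter, mem_univ, true_and, Set.mem_ofPred_eq, not_lt] at ha ⊢
    exact ha.trans hab
  · have := card_filter_add_card_filter_not (s := univ) (fun i : Fin n => (i : ℕ) < n - k)
    rw [Fin.card_filter_val_lt, card_univ, Fintype.card_fin] at this
    omega

theorem sum_le_topSum {n k : ℕ} (v : Fin n → ℝ) {s : Finset (Fin n)} (hs : #s = k) :
    ∑ i ∈ s, v i ≤ topSum v k :=
  le_csSup ((Set.toFinite _).image _).bddAbove ⟨s, hs, rfl⟩

theorem topSum_eq_sum_of_isUpperSet {n : ℕ} {v : Fin n → ℝ} (hv : Monotone v)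
    {t : Finset (Fin n)} (ht : IsUpperSet (t : Set (Fin n))) : topSum v #t = ∑ i ∈ t, v i := by
  refine le_antisymm (csSup_le ⟨_, t, rfl, rfl⟩ ?_) (sum_le_topSum v rfl)
  rintro _ ⟨s, hs, rfl⟩
  exact sum_le_sum_of_monotone_of_isUpperSet hv ht hs

section Allocation

variable {n m : ℕ}

theorem sum_eq_of_mem_allocSet {N S : Finset (Fin n)} {q : ℝ} {x : Fin n → ℝ}
    (hx : x ∈ allocSet n N q) (hS : N ⊆ S) : ∑ i ∈ S, x i = q := by
  rw [← hx.2.2]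
  exact sum_subset (subset_univ S) fun i _ hi => hx.2.1 i fun h => hi (hS h)

theorem uniform_mem_allocSet {N : Finset (Fin n)} {q : ℝ} (hN : N.Nonempty) (hq : 0 ≤ q) :
    (fun i => if i ∈ N then q / #N else 0) ∈ allocSet n N q := by
  refine ⟨fun i => ?_, fun i hi => if_neg hi, ?_⟩
  · dsimp only
    split_ifs <;> positivity
  · rw [sum_ite_mem, univ_inter, sum_const, nsmul_eq_mul,
      mul_div_cancel₀ _ (Nat.cast_ne_zero.2 hN.card_pos.ne')]

theorem sum_eq_sum_q_of_mem_loads {E : ReqSeq n m} {v : Fin n → ℝ} (hv : v ∈ loads E) :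
    ∑ i, v i = ∑ t, E.q t := by
  obtain ⟨x, hx, rfl⟩ := hv
  simp only [Finset.sum_apply]
  rw [sum_comm]
  exact sum_congr rfl fun t _ => (hx t).2.2

/-- The even split already lifts all of `N t` to `c + q t / #(N t)`, so the maximin allocation
must do the same, and the budget `q t` leaves no slack for more. -/
theorem IsWFAlloc.eq_div_card_of_prevLoad_eq {E : ReqSeq n m} {x : Fin m → Fin n → ℝ}
    (hx : IsWFAlloc E x) {t : Fin m} {c : ℝ} (hc : ∀ i ∈ E.N t, prevLoad x t i = c) :
    ∀ i ∈ E.N t, x t i = E.q t / #(E.N t) := by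
  set a := E.q t / #(E.N t)
  have hmin : a + c ≤ reqMinOn E t (fun i => x t i + prevLoad x t i) := by
    refine le_trans ?_ (hx.2 t _ (uniform_mem_allocSet (E.N_nonempty t) (E.q_pos t).le))
    exact le_inf' _ _ fun i hi => by simp [hi, hc i hi, a]
  have hle : ∀ i ∈ E.N t, a ≤ x t i := fun i hi => by
    have := hmin.trans (inf'_le _ hi)
    rw [hc i hi] at this
    linarith
  have hsum : ∑ _i ∈ E.N t, a = ∑ i ∈ E.N t, x t i := by
    rw [sum_const, sum_eq_of_mem_allocSet (hx.1 t) subset_rfl, nsmul_eq_mul,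
      mul_div_cancel₀ _ (Nat.cast_ne_zero.2 (E.N_nonempty t).card_pos.ne')]
  exact fun i hi => ((sum_eq_sum_iff_of_le hle).1 hsum i hi).symm

theorem IsWFAlloc.apply_of_N_eq_Ici {E : ReqSeq n n} (hN : ∀ t, E.N t = Ici t)
    {x : Fin n → Fin n → ℝ} (hx : IsWFAlloc E x) (t i : Fin n) :
    x t i = if t ≤ i then E.q t / ((n - (t : ℕ) : ℕ) : ℝ) else 0 := by
  induction t using WellFoundedLT.induction generalizing i with
  | ind t ih =>
    have hc : ∀ j ∈ E.N t, prevLoad x t j =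
        ∑ s ∈ univ.filter (· < t), E.q s / ((n - (s : ℕ) : ℕ) : ℝ) := by
      intro j hj
      refine sum_congr rfl fun s hs => ?_
      have hst := (mem_filter.1 hs).2
      rw [ih s hst, if_pos (hst.le.trans (by simpa [hN] using hj))]
    split_ifs with hti
    · rw [hx.eq_div_card_of_prevLoad_eq hc i (by simpa [hN] using hti), hN, Fin.card_Ici]
    · exact (hx.1 t).2.1 i (by simpa [hN] using hti)

theorem q_mem_loads_of_self_mem_N {E : ReqSeq n n} (hN : ∀ t, t ∈ E.N t) : E.q ∈ loads E := by
  refine ⟨fun t => Pi.single t (E.q t), fun t => ⟨?_, fun i hi => ?_, ?_⟩, ?_⟩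
  · exact (Pi.single_nonneg.2 (E.q_pos t).le : (0 : Fin n → ℝ) ≤ Pi.single t (E.q t))
  · exact Pi.single_eq_of_ne (by rintro rfl; exact hi (hN i)) _
  · exact sum_pi_single' _ _ _ |>.trans (if_pos (mem_univ t))
  · exact (Finset.univ_sum_single E.q).symm

theorem majorizes_q_of_N_subset_Ici {E : ReqSeq n n} (hN : ∀ t, E.N t ⊆ Ici t)
    (hq : Monotone E.q) {v : Fin n → ℝ} (hv : v ∈ loads E) : Majorizes v E.q := by
  refine ⟨sum_eq_sum_q_of_mem_loads hv, fun k hk => ?_⟩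
  obtain ⟨T, hT, rfl⟩ := Fin.exists_isUpperSet_card_eq hk
  obtain ⟨x, hx, rfl⟩ := hv
  rw [topSum_eq_sum_of_isUpperSet hq hT]
  refine le_trans ?_ (sum_le_topSum _ rfl)
  calc ∑ t ∈ T, E.q t = ∑ t ∈ T, ∑ i ∈ T, x t i := sum_congr rfl fun t ht =>
        (sum_eq_of_mem_allocSet (hx t) fun i hi => hT (mem_Ici.1 (hN t hi)) ht).symm
    _ ≤ ∑ t, ∑ i ∈ T, x t i := sum_le_sum_of_subset_of_nonneg (subset_univ _)
        fun t _ _ => sum_nonneg fun i _ => (hx t).1 i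
    _ = ∑ i ∈ T, (∑ t, x t) i := by simp only [Finset.sum_apply]; exact sum_comm

end Allocation

theorem worst_case_sequence_exists_general (n : ℕ) (ℓ : Fin n → ℝ)
    (hmono : Monotone ℓ)
    (E : ReqSeq n n)
    (hN : ∀ t : Fin n, E.N t = Finset.univ.filter (fun i => t ≤ i))
    (hq : ∀ t, E.q t = ℓ t) :
    (∀ x : Fin n → Fin n → ℝ, IsWFAlloc E x → ∑ t, x t = Hvec n ℓ) ∧
    IsOpt E ℓ := by
  have hNIci : ∀ t, E.N t = Ici t := fun t => (hN t).trans filter_le_eq_Ici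
  obtain rfl : E.q = ℓ := funext hq
  refine ⟨fun x hx => ?_, q_mem_loads_of_self_mem_N (by simp [hNIci]), fun v hv => ?_⟩
  · funext i
    simp only [Finset.sum_apply, Hvec, sum_filter]
    exact sum_congr rfl fun t _ => hx.apply_of_N_eq_Ici hNIci t i
  · exact majorizes_q_of_N_subset_Ici (fun t => (hNIci t).le) hmono hv

/-- **Observation (Existence of Worst-Case Allocation Sequences).** For any
`0 < ℓ(1) ≤ ⋯ ≤ ℓ(n)`, the complete upper-triangular sequence `E` with `m = n`,
`N_t = {t, …, n}` and `q_t = ℓ(t)` satisfies `WF(E) = Hℓ` and `OPT(E) = ℓ`. -/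
theorem worst_case_sequence_exists (n : ℕ) (ℓ : Fin n → ℝ)
    (hpos : ∀ i, 0 < ℓ i) (hmono : Monotone ℓ)
    (E : ReqSeq n n)
    (hN : ∀ t : Fin n, E.N t = Finset.univ.filter (fun i => t ≤ i))
    (hq : ∀ t, E.q t = ℓ t) :
    (∀ x : Fin n → Fin n → ℝ, IsWFAlloc E x → ∑ t, x t = Hvec n ℓ) ∧
    IsOpt E ℓ :=
  worst_case_sequence_exists_general n ℓ hmono E hN hq
end

section
/- Fix n ∈ ℕ, n ≥ 1, and let H ∈ ℝ^{n×n} be the matrix H(i,j) = 1{i ≥ j}/(n − j + 1). Define the Nash social welfare NSW(x) = (Π_{i∈[n]} x(i))^{1/n}. Then inf { NSW(Hℓ)/NSW(ℓ) : ℓ ∈ ℝ^n, 0 < ℓ(1) ≤ ℓ(2) ≤ ⋯ ≤ ℓ(n) } = (n!)^{−1/n}; moreover, n · (n!)^{−1/n} → e as n → ∞. Consequently, the competitive ratio of water-filling for Nash social welfare maximization with n offline nodes equals (n!)^{−1/n}. -/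
open Finset MeasureTheory

/-- Nash social welfare: `NSW(x) = (Π_i x(i))^{1/n}`. -/
noncomputable def NSW (n : ℕ) (x : Fin n → ℝ) : ℝ :=
  (∏ i, x i) ^ ((n : ℝ)⁻¹)

/-!
Sort the loads increasingly. Let `B` be the `k + 1` least loaded nodes under water-filling and
`c` the largest of their loads. Water-filling only gives mass to the least filled nodes of a
neighbourhood, so the requests adjacent to `B` put at most `min (WF i) c` on each node `i`,
while they carry all of `OPT` on `B`. Since `OPT` is majorization-minimal, the `k` smallest
entries of `WF` sum to at most those of `OPT`. Together this gives `OPT₍ₖ₎ ≤ (n - k) WF₍ₖ₎`,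
hence `∏ OPT ≤ n! ∏ WF`, just as `ℓ i ≤ (n - i) (Hℓ) i` gives `∏ ℓ ≤ n! ∏ Hℓ`. Both bounds are
approached by the nested sequence in which request `t` has size `x ^ (n - 1 - t)` and
neighbourhood `{t, …, n - 1}`: there `OPT` is the geometric vector, `WF = H OPT`, and
`NSW (H OPT) / NSW OPT → (n!)^(-1/n)` as `x → 0`. The limit of `n (n!)^(-1/n)` is Stirling's
formula.
-/

open Filter Topology

theorem Finset.sum_le_sum_of_card_eq_of_separated {ι M : Type*} [DecidableEq ι]
    [AddCommGroup M] [LinearOrder M] [IsOrderedAddMonoid M] {s t : Finset ι} {f : ι → M}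
    (c : M) (hst : #s = #t) (hs : ∀ i ∈ s \ t, f i ≤ c) (ht : ∀ i ∈ t \ s, c ≤ f i) :
    ∑ i ∈ s, f i ≤ ∑ i ∈ t, f i := by
  have hlow : ∑ i ∈ s \ t, f i ≤ #(t \ s) • c := card_sdiff_comm hst ▸ sum_le_card_nsmul _ _ _ hs
  have hhigh : #(t \ s) • c ≤ ∑ i ∈ t \ s, f i := card_nsmul_le_sum _ _ _ ht
  rw [← sub_nonneg, ← sum_sdiff_sub_sum_sdiff, sub_nonneg]
  exact hlow.trans hhigh

section SortedSums

variable {n k : ℕ}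

def lowIdx (n k : ℕ) : Finset (Fin n) := {i | (i : ℕ) < k}

lemma card_lowIdx (hk : k ≤ n) : #(lowIdx n k) = k := by
  simp [lowIdx, Fin.card_filter_val_lt, hk]

lemma sum_lowIdx_succ {M : Type*} [AddCommMonoid M] (f : Fin n → M) (hk : k < n) :
    ∑ i ∈ lowIdx n (k + 1), f i = f ⟨k, hk⟩ + ∑ i ∈ lowIdx n k, f i := by
  have : lowIdx n (k + 1) = insert ⟨k, hk⟩ (lowIdx n k) := by
    ext i; simp [lowIdx, Fin.ext_iff]; omega
  rw [this, sum_insert (by simp [lowIdx])]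

theorem Monotone.sum_lowIdx_le {M : Type*} [AddCommGroup M] [LinearOrder M]
    [IsOrderedAddMonoid M] {u : Fin n → M} (hu : Monotone u) {s : Finset (Fin n)}
    (hs : #s = k) (hk : k ≤ n) : ∑ i ∈ lowIdx n k, u i ≤ ∑ i ∈ s, u i := by
  obtain rfl | hk0 := Nat.eq_zero_or_pos k
  · simp [lowIdx, card_eq_zero.mp hs]
  refine sum_le_sum_of_card_eq_of_separated (u ⟨k - 1, by omega⟩) (by rw [card_lowIdx hk, hs])
    (fun i hi => hu ?_) (fun i hi => hu ?_)
  · have := (mem_filter.mp (mem_sdiff.mp hi).1).2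
    simp only [Fin.le_def]; omega
  · have := mem_filter.not.mp (mem_sdiff.mp hi).2
    simp only [Fin.le_def, mem_univ, true_and] at this ⊢; omega

theorem topSum_add_sum_lowIdx {v : Fin n → ℝ} {σ : Equiv.Perm (Fin n)}
    (hσ : Monotone (v ∘ σ)) (hk : k ≤ n) :
    topSum v (n - k) + ∑ i ∈ lowIdx n k, v (σ i) = ∑ i, v i := by
  have hperm (t : Finset (Fin n)) : ∑ i ∈ t.map σ.symm.toEmbedding, (v ∘ σ) i = ∑ i ∈ t, v i := by
    simp [sum_map]
  suffices IsGreatest ((fun s : Finset (Fin n) => ∑ i ∈ s, v i) '' {s | #s = n - k})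
      (∑ i, v i - ∑ i ∈ lowIdx n k, v (σ i)) by
    rw [topSum, this.csSup_eq]; abel
  constructor
  · refine ⟨((lowIdx n k).map σ.toEmbedding)ᶜ, ?_, ?_⟩
    · simp [card_compl, card_lowIdx hk]
    · dsimp only
      rw [← sum_compl_add_sum ((lowIdx n k).map σ.toEmbedding) v, sum_map]
      simp
  · rintro _ ⟨s, hs, rfl⟩
    have hcompl := hσ.sum_lowIdx_le (s := sᶜ.map σ.symm.toEmbedding)
      (by simp only [Set.mem_ofPred_eq] at hs; simp [card_compl, hs]; omega) hk
    rw [hperm] at hcompl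
    have := sum_compl_add_sum s v
    simp only [Function.comp_apply] at hcompl ⊢
    linarith

theorem Majorizes.sum_lowIdx_sort_le {w ℓ : Fin n → ℝ} (h : Majorizes w ℓ) (hk : k ≤ n) :
    ∑ i ∈ lowIdx n k, w (Tuple.sort w i) ≤ ∑ i ∈ lowIdx n k, ℓ (Tuple.sort ℓ i) := by
  have hw := topSum_add_sum_lowIdx (Tuple.monotone_sort w) hk
  have hℓ := topSum_add_sum_lowIdx (Tuple.monotone_sort ℓ) hk
  linarith [h.1, h.2 (n - k) (Nat.sub_le n k)]

theorem Majorizes.prod_eq {v w : Fin n → ℝ} (hvw : Majorizes v w) (hwv : Majorizes w v) :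
    ∏ i, v i = ∏ i, w i := by
  have hlow {k : ℕ} (hk : k ≤ n) :
      ∑ i ∈ lowIdx n k, v (Tuple.sort v i) = ∑ i ∈ lowIdx n k, w (Tuple.sort w i) :=
    le_antisymm (hvw.sum_lowIdx_sort_le hk) (hwv.sum_lowIdx_sort_le hk)
  rw [← Equiv.prod_comp (Tuple.sort v) v, ← Equiv.prod_comp (Tuple.sort w) w]
  refine prod_congr rfl fun j _ => ?_
  have hv := sum_lowIdx_succ (fun i => v (Tuple.sort v i)) j.2
  have hw := sum_lowIdx_succ (fun i => w (Tuple.sort w i)) j.2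
  rw [hlow j.2, hlow j.2.le] at hv
  simp only [Fin.eta] at hv hw
  linarith

end SortedSums

section WaterFilling

variable {n m : ℕ}

lemma isCompact_allocSet (N : Finset (Fin n)) (q : ℝ) : IsCompact (allocSet n N q) := by
  have hset : allocSet n N q = {x | 0 ≤ x} ∩ ((⋂ i ∈ Nᶜ, {x | x i = 0}) ∩ {x | ∑ i, x i = q}) := by
    ext x; simp [allocSet, Pi.le_def]
  have hclosed : IsClosed (allocSet n N q) := hset ▸
    (isClosed_le continuous_const continuous_id).inter <|
      (isClosed_biInter fun i _ => isClosed_eq (continuous_apply i) continuous_const).inter <|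
      isClosed_eq (continuous_finsetSum _ fun i _ => continuous_apply i) continuous_const
  refine (isCompact_Icc (b := fun _ => q)).of_isClosed_subset hclosed
    fun x hx => ⟨hx.1, fun i => ?_⟩
  exact hx.2.2 ▸ single_le_sum (fun j _ => hx.1 j) (mem_univ i)

lemma single_mem_allocSet {N : Finset (Fin n)} {q : ℝ} {i : Fin n} (hi : i ∈ N) (hq : 0 ≤ q) :
    Pi.single i q ∈ allocSet n N q := by
  refine ⟨fun j => ?_, fun j hj => ?_, by simp⟩
  · by_cases h : j = i <;> simp [h, hq]
  · simp [show j ≠ i by rintro rfl; exact hj hi]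

variable (E : ReqSeq n m)

lemma exists_isMaxOn_reqMinOn (t : Fin m) (p : Fin n → ℝ) :
    ∃ z ∈ allocSet n (E.N t) (E.q t), ∀ y ∈ allocSet n (E.N t) (E.q t),
      reqMinOn E t (fun i => y i + p i) ≤ reqMinOn E t (fun i => z i + p i) := by
  obtain ⟨i, hi⟩ := E.N_nonempty t
  have hcont : Continuous fun y : Fin n → ℝ => reqMinOn E t (fun i => y i + p i) :=
    Continuous.finset_inf'_apply _ fun i _ => (continuous_apply i).add continuous_const
  obtain ⟨z, hz, hmax⟩ := (isCompact_allocSet _ _).exists_isMaxOn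
    ⟨_, single_mem_allocSet hi (E.q_pos t).le⟩ hcont.continuousOn
  exact ⟨z, hz, fun y hy => hmax hy⟩

noncomputable def wfStep (t : Fin m) (p : Fin n → ℝ) : Fin n → ℝ :=
  (exists_isMaxOn_reqMinOn E t p).choose

noncomputable def wfTraj (t : Fin m) : Fin n → ℝ :=
  wfStep E t fun i => ∑ s ∈ (univ.filter (· < t)).attach, wfTraj s i
termination_by t
decreasing_by exact (mem_filter.mp s.2).2

lemma wfTraj_eq (t : Fin m) : wfTraj E t = wfStep E t (prevLoad (wfTraj E) t) := by
  rw [wfTraj]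
  congr 1
  funext i
  exact sum_attach _ (fun s => wfTraj E s i)

theorem isWFAlloc_wfTraj : IsWFAlloc E (wfTraj E) := by
  refine ⟨fun t => ?_, fun t => ?_⟩ <;> rw [wfTraj_eq]
  exacts [(exists_isMaxOn_reqMinOn E t _).choose_spec.1,
    (exists_isMaxOn_reqMinOn E t _).choose_spec.2]

variable {E}

lemma Feasible.add_prevLoad_le {x : Fin m → Fin n → ℝ} (hx : Feasible E x) (t : Fin m)
    (i : Fin n) : x t i + prevLoad x t i ≤ (∑ s, x s) i := by
  rw [prevLoad, ← sum_insert (f := fun s => x s i) (by simp), Finset.sum_apply]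
  exact sum_le_sum_of_subset_of_nonneg (subset_univ _) fun s _ _ => (hx s).1 i

/-- Otherwise moving a little of the node's mass to the whole neighbourhood would raise the
lowest level. -/
theorem IsWFAlloc.add_prevLoad_eq_reqMinOn {x : Fin m → Fin n → ℝ} (hx : IsWFAlloc E x)
    {t : Fin m} {i : Fin n} (hi : 0 < x t i) :
    x t i + prevLoad x t i = reqMinOn E t (fun j => x t j + prevLoad x t j) := by
  classical
  obtain ⟨hnn, hsupp, hsum⟩ := hx.1 t
  have hiN : i ∈ E.N t := by_contra fun h => hi.ne' (hsupp i h)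
  have hcard : (0 : ℝ) < #(E.N t) := Nat.cast_pos.mpr (card_pos.mpr ⟨i, hiN⟩)
  refine le_antisymm ?_ (inf'_le _ hiN)
  by_contra! hgt
  set c := reqMinOn E t (fun j => x t j + prevLoad x t j)
  set ε := min (x t i) ((x t i + prevLoad x t i - c) / 2)
  have hε : 0 < ε := lt_min hi (by linarith)
  have hεi : ε ≤ x t i := min_le_left _ _
  have hεc : ε ≤ (x t i + prevLoad x t i - c) / 2 := min_le_right _ _
  have hεN : 0 < ε / #(E.N t) := div_pos hε hcard
  let y : Fin n → ℝ := fun j =>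
    x t j - (if j = i then ε else 0) + (if j ∈ E.N t then ε / #(E.N t) else 0)
  have hy : y ∈ allocSet n (E.N t) (E.q t) := by
    refine ⟨fun j => ?_, fun j hj => ?_, ?_⟩
    · have h1 : 0 ≤ x t j - (if j = i then ε else 0) := by
        split_ifs with h
        · exact h ▸ sub_nonneg.mpr hεi
        · simpa using hnn j
      have h2 : 0 ≤ (if j ∈ E.N t then ε / #(E.N t) else 0) := by split_ifs <;> positivity
      exact add_nonneg h1 h2
    · simp [y, hj, hsupp j hj, show j ≠ i by rintro rfl; exact hj hiN]
    · simp only [y, sum_add_distrib, sum_sub_distrib, sum_ite_eq', mem_univ, if_true,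
        sum_ite_mem, univ_inter, sum_const, nsmul_eq_mul, hsum]
      field_simp
      ring
  refine (hx.2 t y hy).not_gt ((lt_inf'_iff _).mpr fun j hj => ?_)
  by_cases hji : j = i
  · subst hji
    simp only [y, if_true, hj]
    linarith
  · have : c ≤ x t j + prevLoad x t j := inf'_le (fun j => x t j + prevLoad x t j) hj
    simp only [y, hji, hj, if_true, if_false]
    linarith

end WaterFilling

section Loads
variable {n m : ℕ} {E : ReqSeq n m}

theorem IsWFAlloc.add_prevLoad_le_load {x : Fin m → Fin n → ℝ} (hx : IsWFAlloc E x)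
    {t : Fin m} {i j : Fin n} (hi : 0 < x t i) (hj : j ∈ E.N t) :
    x t i + prevLoad x t i ≤ (∑ s, x s) j :=
  (hx.add_prevLoad_eq_reqMinOn hi).trans_le <|
    (inf'_le (fun j => x t j + prevLoad x t j) hj).trans (hx.1.add_prevLoad_le t j)

/-- The last request adjacent to `B` that gives mass to node `i` brings it exactly to the lowest
level of its neighbourhood, which meets `B`. -/
theorem IsWFAlloc.sum_q_le_sum_min {x : Fin m → Fin n → ℝ} (hx : IsWFAlloc E x)
    (B : Finset (Fin n)) {c : ℝ} (hc : 0 ≤ c) (hB : ∀ j ∈ B, (∑ s, x s) j ≤ c) :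
    ∑ t with (E.N t ∩ B).Nonempty, E.q t ≤ ∑ i, min ((∑ t, x t) i) c := by
  set T : Finset (Fin m) := {t | (E.N t ∩ B).Nonempty}
  have hswap : ∑ t ∈ T, E.q t = ∑ i, ∑ t ∈ T, x t i := by
    rw [sum_comm]; exact sum_congr rfl fun t _ => ((hx.1 t).2.2).symm
  rw [hswap]
  refine sum_le_sum fun i _ => le_min ?_ ?_
  · rw [Finset.sum_apply]
    exact sum_le_sum_of_subset_of_nonneg (subset_univ _) fun t _ _ => (hx.1 t).1 i
  set P := T.filter (fun t => 0 < x t i)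
  have hP : ∑ t ∈ T, x t i = ∑ t ∈ P, x t i :=
    (sum_filter_of_ne fun t _ h => ((hx.1 t).1 i).lt_of_ne' h).symm
  obtain hPe | hPne := P.eq_empty_or_nonempty
  · rw [hP, hPe, sum_empty]; exact hc
  obtain ⟨hlastT, hlast⟩ := mem_filter.mp (P.max'_mem hPne)
  obtain ⟨j, hj⟩ := (mem_filter.mp hlastT).2
  obtain ⟨hjN, hjB⟩ := mem_inter.mp hj
  have hPsub : P ⊆ insert (P.max' hPne) (univ.filter (· < P.max' hPne)) := fun t ht => by
    rcases (P.le_max' t ht).lt_or_eq with h | h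
    · exact mem_insert_of_mem (mem_filter.mpr ⟨mem_univ _, h⟩)
    · exact h ▸ mem_insert_self _ _
  calc ∑ t ∈ T, x t i = ∑ t ∈ P, x t i := hP
    _ ≤ x (P.max' hPne) i + prevLoad x (P.max' hPne) i := by
      rw [prevLoad, ← sum_insert (f := fun s => x s i) (by simp)]
      exact sum_le_sum_of_subset_of_nonneg hPsub fun t _ _ => (hx.1 t).1 i
    _ ≤ (∑ s, x s) j := hx.add_prevLoad_le_load hlast hjN
    _ ≤ c := hB j hjB

lemma sum_le_sum_q_of_mem_loads {ℓ : Fin n → ℝ} (hℓ : ℓ ∈ loads E) (B : Finset (Fin n)) :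
    ∑ i ∈ B, ℓ i ≤ ∑ t with (E.N t ∩ B).Nonempty, E.q t := by
  obtain ⟨y, hy, rfl⟩ := hℓ
  simp only [Finset.sum_apply]
  rw [sum_comm, sum_filter]
  refine sum_le_sum fun t _ => ?_
  split_ifs with h
  · exact (hy t).2.2 ▸ sum_le_sum_of_subset_of_nonneg (subset_univ _) fun i _ _ => (hy t).1 i
  · exact (sum_eq_zero fun i hi => (hy t).2.1 i fun hiN => h ⟨i, mem_inter.mpr ⟨hiN, hi⟩⟩).le

lemma nonneg_of_mem_loads {ℓ : Fin n → ℝ} (hℓ : ℓ ∈ loads E) (i : Fin n) : 0 ≤ ℓ i := by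
  obtain ⟨y, hy, rfl⟩ := hℓ
  simpa only [Finset.sum_apply] using sum_nonneg fun t _ => (hy t).1 i

lemma sum_of_mem_loads {ℓ : Fin n → ℝ} (hℓ : ℓ ∈ loads E) : ∑ i, ℓ i = ∑ t, E.q t := by
  obtain ⟨y, hy, rfl⟩ := hℓ
  simp only [Finset.sum_apply]
  rw [sum_comm]
  exact sum_congr rfl fun t _ => (hy t).2.2

lemma sum_q_le_sum_of_mem_loads {ℓ : Fin n → ℝ} (hℓ : ℓ ∈ loads E) (C : Finset (Fin n)) :
    ∑ t with E.N t ⊆ C, E.q t ≤ ∑ i ∈ C, ℓ i := by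
  obtain ⟨y, hy, rfl⟩ := hℓ
  simp only [Finset.sum_apply]
  rw [sum_comm, sum_filter]
  refine sum_le_sum fun t _ => ?_
  split_ifs with h
  · refine ((hy t).2.2 ▸ sum_subset (subset_univ C) fun i _ hi => (hy t).2.1 i ?_).ge
    exact fun hiN => hi (h hiN)
  · exact sum_nonneg fun i _ => (hy t).1 i

lemma exists_isWFAlloc_wfLoad_eq (E : ReqSeq n m) :
    ∃ x, IsWFAlloc E x ∧ wfLoad E = ∑ t, x t := by
  have h : ∃ x, IsWFAlloc E x := ⟨_, isWFAlloc_wfTraj E⟩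
  exact ⟨h.choose, h.choose_spec, by rw [wfLoad, dif_pos h]⟩

lemma isOpt_optLoad (h : ∃ ℓ, IsOpt E ℓ) : IsOpt E (optLoad E) := by
  rw [optLoad, dif_pos h]
  exact h.choose_spec

lemma IsOpt.prod_eq {ℓ₁ ℓ₂ : Fin n → ℝ} (h₁ : IsOpt E ℓ₁) (h₂ : IsOpt E ℓ₂) :
    ∏ i, ℓ₁ i = ∏ i, ℓ₂ i :=
  (h₂.2 _ h₁.1).prod_eq (h₁.2 _ h₂.1)

lemma isOpt_optLoad_of_NSW_pos (hn : 0 < n) (h : 0 < NSW n (optLoad E)) :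
    IsOpt E (optLoad E) := by
  refine isOpt_optLoad (by_contra fun hE => h.ne' ?_)
  rw [optLoad, dif_neg hE, NSW, prod_eq_zero (mem_univ ⟨0, hn⟩) rfl,
    Real.zero_rpow (inv_ne_zero (Nat.cast_ne_zero.mpr hn.ne'))]

end Loads

lemma prod_natCast_sub_eq_factorial (n : ℕ) : ∏ i : Fin n, ((n - i : ℕ) : ℝ) = n.factorial := by
  rw [← Equiv.prod_comp Fin.revPerm, ← prod_range_add_one_eq_factorial, Nat.cast_prod,
    ← Fin.prod_univ_eq_prod_range]
  refine prod_congr rfl fun i _ => ?_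
  simp only [Fin.revPerm_apply, Fin.val_rev]
  congr 1
  omega

section CompetitiveBound
variable {n m : ℕ} {E : ReqSeq n m}

theorem IsWFAlloc.sort_le_mul_sort {x : Fin m → Fin n → ℝ} (hx : IsWFAlloc E x)
    {ℓ : Fin n → ℝ} (hℓ : IsOpt E ℓ) (k : Fin n) :
    ℓ (Tuple.sort ℓ k) ≤ (n - k : ℕ) * (∑ t, x t) (Tuple.sort (∑ t, x t) k) := by
  classical
  set w := ∑ t, x t
  set σw := Tuple.sort w
  set σℓ := Tuple.sort ℓ
  have hu : Monotone (w ∘ σw) := Tuple.monotone_sort w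
  have hv : Monotone (ℓ ∘ σℓ) := Tuple.monotone_sort ℓ
  set B := (lowIdx n (k + 1)).map σw.toEmbedding
  have hcardB : #B = k + 1 := by simp [B, card_lowIdx k.2]
  have hB : ∀ j ∈ B, w j ≤ w (σw k) := by
    intro j hj
    obtain ⟨i, hi, rfl⟩ := mem_map.mp hj
    exact hu (Fin.le_def.mpr (by simp [lowIdx] at hi; omega))
  have hopt_le : ∑ i ∈ lowIdx n (k + 1), ℓ (σℓ i) ≤ ∑ i ∈ B, ℓ i := by
    have := hv.sum_lowIdx_le (s := B.map σℓ.symm.toEmbedding) (by simp [hcardB]) k.2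
    simpa [sum_map] using this
  have hwf_le : ∑ i, min (w i) (w (σw k))
      ≤ ∑ i ∈ lowIdx n (k + 1), w (σw i) + (n - (k + 1) : ℕ) * w (σw k) := by
    rw [← Equiv.sum_comp σw, ← sum_compl_add_sum (lowIdx n (k + 1)), add_comm]
    gcongr ?_ + ?_
    · exact sum_le_sum fun i _ => min_le_left _ _
    · refine (sum_le_card_nsmul _ _ _ fun i _ => min_le_right _ _).trans_eq ?_
      simp [card_compl, card_lowIdx k.2]
  have hmass : ∑ t with (E.N t ∩ B).Nonempty, E.q t ≤ ∑ i, min (w i) (w (σw k)) :=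
    hx.sum_q_le_sum_min B (nonneg_of_mem_loads ⟨x, hx.1, rfl⟩ _) hB
  have hmaj : ∑ i ∈ lowIdx n k, w (σw i) ≤ ∑ i ∈ lowIdx n k, ℓ (σℓ i) :=
    (hℓ.2 w ⟨x, hx.1, rfl⟩).sum_lowIdx_sort_le k.2.le
  have hsucc_w := sum_lowIdx_succ (fun i => w (σw i)) k.2
  have hsucc_ℓ := sum_lowIdx_succ (fun i => ℓ (σℓ i)) k.2
  have hcast : ((n - k : ℕ) : ℝ) = (n - (k + 1) : ℕ) + 1 := by
    rw [← Nat.cast_add_one]; congr 1; omega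
  simp only [Fin.eta] at hsucc_w hsucc_ℓ
  rw [hcast]
  linarith [sum_le_sum_q_of_mem_loads hℓ.1 B]

theorem IsWFAlloc.prod_le_factorial_mul {x : Fin m → Fin n → ℝ} (hx : IsWFAlloc E x)
    {ℓ : Fin n → ℝ} (hℓ : IsOpt E ℓ) :
    ∏ i, ℓ i ≤ n.factorial * ∏ i, (∑ t, x t) i := calc
  ∏ i, ℓ i = ∏ k, ℓ (Tuple.sort ℓ k) := (Equiv.prod_comp _ ℓ).symm
  _ ≤ ∏ k : Fin n, (n - k : ℕ) * (∑ t, x t) (Tuple.sort (∑ t, x t) k) :=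
    prod_le_prod (fun k _ => nonneg_of_mem_loads hℓ.1 _) fun k _ => hx.sort_le_mul_sort hℓ k
  _ = n.factorial * ∏ i, (∑ t, x t) i := by
    rw [prod_mul_distrib, prod_natCast_sub_eq_factorial, Equiv.prod_comp]

end CompetitiveBound

section NashWelfare
variable {n : ℕ}

theorem rpow_neg_inv_le_NSW_div {v w : Fin n → ℝ} {c : ℝ} (hc : 0 < c) (hv : 0 < ∏ i, v i)
    (h : ∏ i, v i ≤ c * ∏ i, w i) :
    c ^ (-(n : ℝ)⁻¹) ≤ NSW n w / NSW n v := by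
  rw [NSW, NSW, le_div_iff₀ (Real.rpow_pos_of_pos hv _), Real.rpow_neg hc.le,
    ← Real.inv_rpow hc.le, ← Real.mul_rpow (inv_nonneg.2 hc.le) hv.le]
  exact Real.rpow_le_rpow (by positivity) ((inv_mul_le_iff₀ hc).mpr h) (by positivity)

lemma prod_pos_of_NSW_pos (hn : 0 < n) {v : Fin n → ℝ} (hv : ∀ i, 0 ≤ v i)
    (h : 0 < NSW n v) : 0 < ∏ i, v i := by
  refine (prod_nonneg fun i _ => hv i).lt_of_ne fun h0 => h.ne' ?_
  rw [NSW, ← h0, Real.zero_rpow (inv_ne_zero (Nat.cast_ne_zero.mpr hn.ne'))]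

lemma NSW_div_NSW {v w : Fin n → ℝ} (hv : ∀ i, 0 < v i) (hw : ∀ i, 0 ≤ w i) :
    NSW n w / NSW n v = (∏ i, w i / v i) ^ (n : ℝ)⁻¹ := by
  rw [NSW, NSW, ← Real.div_rpow (prod_nonneg fun i _ => hw i)
    (prod_pos fun i _ => hv i).le, prod_div_distrib]

lemma Hvec_pos {ℓ : Fin n → ℝ} (hℓ : ∀ i, 0 < ℓ i) (i : Fin n) : 0 < Hvec n ℓ i :=
  sum_pos (fun j _ => div_pos (hℓ j) (Nat.cast_pos.mpr (Nat.sub_pos_of_lt j.2)))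
    ⟨i, by simp⟩

lemma le_mul_Hvec {ℓ : Fin n → ℝ} (hℓ : ∀ i, 0 ≤ ℓ i) (i : Fin n) :
    ℓ i ≤ (n - i : ℕ) * Hvec n ℓ i := by
  have hpos : (0 : ℝ) < (n - i : ℕ) := Nat.cast_pos.mpr (Nat.sub_pos_of_lt i.2)
  have : ℓ i / (n - i : ℕ) ≤ Hvec n ℓ i :=
    single_le_sum (f := fun j : Fin n => ℓ j / (n - j : ℕ))
      (fun j _ => div_nonneg (hℓ j) (Nat.cast_nonneg _)) (by simp)
  rwa [div_le_iff₀' hpos] at this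

theorem prod_le_factorial_mul_prod_Hvec {ℓ : Fin n → ℝ} (hℓ : ∀ i, 0 ≤ ℓ i) :
    ∏ i, ℓ i ≤ n.factorial * ∏ i, Hvec n ℓ i := calc
  ∏ i, ℓ i ≤ ∏ i : Fin n, (n - i : ℕ) * Hvec n ℓ i :=
    prod_le_prod (fun i _ => hℓ i) fun i _ => le_mul_Hvec hℓ i
  _ = n.factorial * ∏ i, Hvec n ℓ i := by rw [prod_mul_distrib, prod_natCast_sub_eq_factorial]

end NashWelfare

section NestedInstance
variable {n : ℕ} {x : ℝ}

noncomputable def geomLoad (n : ℕ) (x : ℝ) : Fin n → ℝ := fun j => x ^ (n - 1 - j)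

lemma geomLoad_pos (hx : 0 < x) (j : Fin n) : 0 < geomLoad n x j := pow_pos hx _

lemma monotone_geomLoad (hx₀ : 0 ≤ x) (hx₁ : x ≤ 1) : Monotone (geomLoad n x) :=
  fun a b hab => pow_le_pow_of_le_one hx₀ hx₁ (by rw [Fin.le_def] at hab; omega)

noncomputable def nestedReqSeq (n : ℕ) (x : ℝ) (hx : 0 < x) : ReqSeq n n where
  N t := Ici t
  q := geomLoad n x
  N_nonempty _ := nonempty_Ici
  q_pos := geomLoad_pos hx

/-- The earlier requests have raised the whole neighbourhood of `t` to a common level, so the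
even split is the allocation that maximizes its lowest level. -/
theorem IsWFAlloc.eq_of_nestedReqSeq {hx : 0 < x} {y : Fin n → Fin n → ℝ}
    (hy : IsWFAlloc (nestedReqSeq n x hx) y) (t i : Fin n) :
    y t i = if t ≤ i then geomLoad n x t / (n - t : ℕ) else 0 := by
  induction t using WellFoundedLT.induction generalizing i with
  | ind t ih =>
  set E := nestedReqSeq n x hx
  set a := geomLoad n x t / (n - t : ℕ)
  set P := ∑ s with s < t, geomLoad n x s / (n - s : ℕ)
  have hN : E.N t = Ici t := rfl
  have hprev : ∀ j ∈ E.N t, prevLoad y t j = P := fun j hj =>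
    sum_congr rfl fun s hs => by
      rw [ih s (mem_filter.mp hs).2, if_pos ((mem_filter.mp hs).2.le.trans (mem_Ici.mp hj))]
  obtain ⟨hnn, hsupp, hsum⟩ := hy.1 t
  split_ifs with hti
  swap
  · exact hsupp i (by simpa [hN] using hti)
  have hcard : ((n - t : ℕ) : ℝ) ≠ 0 := Nat.cast_ne_zero.mpr (Nat.sub_pos_of_lt t.2).ne'
  have hEq : (n - t : ℕ) * a = E.q t := mul_div_cancel₀ _ hcard
  let u : Fin n → ℝ := fun j => if j ∈ E.N t then a else 0
  have hu : u ∈ allocSet n (E.N t) (E.q t) := by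
    refine ⟨fun j => ?_, fun j hj => if_neg hj, ?_⟩
    · have : 0 ≤ a := div_nonneg (geomLoad_pos hx t).le (Nat.cast_nonneg _)
      by_cases h : j ∈ E.N t <;> simp [u, h, this]
    · rw [sum_ite_mem, univ_inter, sum_const, hN, Fin.card_Ici, nsmul_eq_mul, hEq]
  have hge : ∀ j ∈ E.N t, a ≤ y t j := fun j hj => by
    have hmin := (le_inf' _ _ fun k hk => (show a + P ≤ u k + prevLoad y t k by
      simp only [u, if_pos hk, hprev k hk, le_refl])).trans (hy.2 t u hu)
    have := hmin.trans (inf'_le _ hj)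
    rw [hprev j hj] at this
    linarith
  have hsumN : ∑ j ∈ E.N t, y t j = ∑ j ∈ E.N t, a := by
    rw [sum_subset (subset_univ _) fun j _ hj => hsupp j hj, hsum, sum_const, hN, Fin.card_Ici,
      nsmul_eq_mul, hEq]
  exact ((sum_eq_sum_iff_of_le hge).mp hsumN.symm i (by simpa [hN] using hti)).symm

theorem wfLoad_nestedReqSeq (hx : 0 < x) :
    wfLoad (nestedReqSeq n x hx) = Hvec n (geomLoad n x) := by
  obtain ⟨y, hy, hw⟩ := exists_isWFAlloc_wfLoad_eq (nestedReqSeq n x hx)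
  funext i
  simp only [hw, Finset.sum_apply, hy.eq_of_nestedReqSeq, Hvec, sum_filter]

theorem isOpt_geomLoad (hx : 0 < x) (hx₁ : x ≤ 1) :
    IsOpt (nestedReqSeq n x hx) (geomLoad n x) := by
  classical
  refine ⟨⟨fun t => Pi.single t (geomLoad n x t),
    fun t => single_mem_allocSet (mem_Ici.mpr le_rfl) (geomLoad_pos hx t).le,
    (univ_sum_single _).symm⟩, fun ℓ hℓ => ⟨by rw [sum_of_mem_loads hℓ]; rfl, fun k hk => ?_⟩⟩
  obtain ⟨j, hj, rfl⟩ : ∃ j ≤ n, k = n - j := ⟨n - k, Nat.sub_le n k, by omega⟩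
  set C := (lowIdx n j)ᶜ
  have hgeom := topSum_add_sum_lowIdx (v := geomLoad n x) (σ := Equiv.refl _)
    (monotone_geomLoad hx.le hx₁) hj
  have hsplit := sum_compl_add_sum (lowIdx n j) (geomLoad n x)
  have hC : ∑ i ∈ C, geomLoad n x i ≤ ∑ i ∈ C, ℓ i := by
    refine (sum_le_sum_of_subset_of_nonneg (fun t ht => ?_) fun t _ _ => (geomLoad_pos hx t).le)
      |>.trans (sum_q_le_sum_of_mem_loads hℓ C)
    refine mem_filter.mpr ⟨mem_univ _, fun i hi => ?_⟩
    simp only [C, lowIdx, mem_compl, mem_filter, mem_univ, true_and, not_lt] at ht ⊢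
    exact ht.trans (Fin.le_def.mp (mem_Ici.mp hi))
  have hℓC : ∑ i ∈ C, ℓ i ≤ topSum ℓ (n - j) :=
    le_csSup (Set.toFinite _).bddAbove ⟨C, by simp [C, card_compl, card_lowIdx hj], rfl⟩
  simp only [Equiv.refl_apply] at hgeom
  linarith

theorem NSW_optLoad_nestedReqSeq (hx : 0 < x) (hx₁ : x ≤ 1) :
    NSW n (optLoad (nestedReqSeq n x hx)) = NSW n (geomLoad n x) := by
  rw [NSW, NSW, (isOpt_optLoad ⟨_, isOpt_geomLoad hx hx₁⟩).prod_eq (isOpt_geomLoad hx hx₁)]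

end NestedInstance

section Limits
variable {n : ℕ}

lemma csInf_eq_of_forall_le_of_tendsto {α : Type*} {l : Filter α} [l.NeBot] {S : Set ℝ} {L : ℝ}
    {f : α → ℝ} (hlb : ∀ r ∈ S, L ≤ r) (hmem : ∀ᶠ a in l, f a ∈ S) (hf : Tendsto f l (𝓝 L)) :
    sInf S = L := by
  obtain ⟨a, ha⟩ := hmem.exists
  exact le_antisymm (ge_of_tendsto hf (hmem.mono fun a ha => csInf_le ⟨L, hlb⟩ ha))
    (le_csInf ⟨_, ha⟩ hlb)

lemma Hvec_geomLoad_div {x : ℝ} (hx : 0 < x) (i : Fin n) :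
    Hvec n (geomLoad n x) i / geomLoad n x i = ∑ j with j ≤ i, x ^ (i - j : ℕ) / (n - j : ℕ) := by
  rw [Hvec, sum_div]
  refine sum_congr rfl fun j hj => ?_
  have hji : (j : ℕ) ≤ i := Fin.le_def.mp (mem_filter.mp hj).2
  rw [geomLoad, geomLoad, show n - 1 - (j : ℕ) = (i - j) + (n - 1 - i) by omega, pow_add]
  field_simp

theorem tendsto_NSW_Hvec_geomLoad_div :
    Tendsto (fun x => NSW n (Hvec n (geomLoad n x)) / NSW n (geomLoad n x)) (𝓝[>] 0)
      (𝓝 ((n.factorial : ℝ) ^ (-(n : ℝ)⁻¹))) := by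
  set p : ℝ → ℝ := fun x => ∏ i : Fin n, ∑ j with j ≤ i, x ^ (i - j : ℕ) / (n - j : ℕ)
  have hp0 : p 0 = (n.factorial : ℝ)⁻¹ := by
    rw [← prod_natCast_sub_eq_factorial, ← prod_inv_distrib]
    refine prod_congr rfl fun i _ => ?_
    rw [sum_eq_single_of_mem i (by simp) fun j hj hji => ?_]
    · simp
    · have : j < i := lt_of_le_of_ne (mem_filter.mp hj).2 hji
      rw [zero_pow (by rw [Fin.lt_def] at this; omega), zero_div]
  have hp : Continuous p := by fun_prop
  have hlim := (((hp.continuousAt (x := 0)).rpow_const (p := (n : ℝ)⁻¹)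
    (Or.inl (by rw [hp0]; positivity))).tendsto
    ).mono_left (nhdsWithin_le_nhds (s := Set.Ioi 0))
  rw [hp0, Real.inv_rpow (Nat.cast_nonneg _), ← Real.rpow_neg (Nat.cast_nonneg _)] at hlim
  refine hlim.congr' (eventually_nhdsWithin_of_forall fun x (hx : 0 < x) => ?_)
  simp only [NSW_div_NSW (geomLoad_pos hx) fun i => (Hvec_pos (geomLoad_pos hx) i).le, p,
    Hvec_geomLoad_div hx]

open Real Stirling in
theorem tendsto_mul_factorial_rpow_neg_inv :
    Tendsto (fun k : ℕ => (k : ℝ) * (k.factorial : ℝ) ^ (-(k : ℝ)⁻¹)) atTop (𝓝 (exp 1)) := by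
  have hexp : ∀ k : ℕ, k ≠ 0 → (k : ℝ) * (k.factorial : ℝ) ^ (-(k : ℝ)⁻¹)
      = exp (1 - (log (stirlingSeq k) / k + log (2 * k) / (2 * k))) := fun k hk => by
    have hs : 0 < stirlingSeq k := (sqrt_pos.mpr pi_pos).trans_le (sqrt_pi_le_stirlingSeq hk)
    have hk' : (0 : ℝ) < k := Nat.cast_pos.mpr (Nat.pos_of_ne_zero hk)
    have hfact : (k.factorial : ℝ) = stirlingSeq k * (√(2 * k) * (k / exp 1) ^ k) := by
      rw [stirlingSeq, div_mul_cancel₀ _ (by positivity)]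
    have hlog : log k.factorial = log (stirlingSeq k) + log (2 * k) / 2 + k * (log k - 1) := by
      rw [hfact, log_mul hs.ne' (by positivity), log_mul (by positivity) (by positivity),
        log_sqrt (by positivity), log_pow, log_div hk'.ne' (exp_pos 1).ne', log_exp]
      ring
    rw [rpow_def_of_pos (by positivity), show 1 - (log (stirlingSeq k) / k + log (2 * k) / (2 * k))
      = log k + log k.factorial * -(k : ℝ)⁻¹ by rw [hlog]; field_simp; ring, exp_add, exp_log hk']
  have hs : Tendsto (fun k : ℕ => log (stirlingSeq k) / k) atTop (𝓝 0) :=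
    ((continuousAt_log (by positivity)).tendsto.comp tendsto_stirlingSeq_sqrt_pi).div_atTop
      tendsto_natCast_atTop_atTop
  have hl : Tendsto (fun k : ℕ => log (2 * k) / (2 * k)) atTop (𝓝 0) :=
    isLittleO_log_id_atTop.tendsto_div_nhds_zero.comp
      (tendsto_natCast_atTop_atTop.const_mul_atTop two_pos)
  have := (continuous_exp.tendsto _).comp (tendsto_const_nhds (x := (1 : ℝ)).sub (hs.add hl))
  rw [add_zero, sub_zero] at this
  exact this.congr' (eventually_ne_atTop 0 |>.mono fun k hk => (hexp k hk).symm)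

end Limits

/-- **Lemma (NSW Competitive Ratio).** `inf { NSW(Hℓ)/NSW(ℓ) : 0 < ℓ(1) ≤ ⋯ ≤ ℓ(n) }
= (n!)^{−1/n}`; moreover `n·(n!)^{−1/n} → e`, and the competitive ratio of water-filling
for NSW maximization with `n` offline nodes equals `(n!)^{−1/n}`. -/
theorem nsw_competitive_ratio (n : ℕ) (hn : 1 ≤ n) :
    (sInf {r : ℝ | ∃ ℓ : Fin n → ℝ, (∀ i, 0 < ℓ i) ∧ Monotone ℓ ∧
        r = NSW n (Hvec n ℓ) / NSW n ℓ}
      = (n.factorial : ℝ) ^ (-(n : ℝ)⁻¹)) ∧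
    (Filter.Tendsto (fun k : ℕ => (k : ℝ) * (k.factorial : ℝ) ^ (-(k : ℝ)⁻¹))
      Filter.atTop (nhds (Real.exp 1))) ∧
    (sInf {r : ℝ | ∃ (m : ℕ) (E : ReqSeq n m), 0 < ∑ t, E.q t ∧
        0 < NSW n (optLoad E) ∧
        r = NSW n (wfLoad E) / NSW n (optLoad E)}
      = (n.factorial : ℝ) ^ (-(n : ℝ)⁻¹)) := by
  have hsmall : ∀ᶠ x in 𝓝[>] (0 : ℝ), 0 < x ∧ x ≤ 1 := by
    filter_upwards [Ioc_mem_nhdsGT one_pos] with x hx using hx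
  refine ⟨?_, tendsto_mul_factorial_rpow_neg_inv, ?_⟩ <;>
    refine csInf_eq_of_forall_le_of_tendsto ?_ (hsmall.mono fun x hx => ?_)
      tendsto_NSW_Hvec_geomLoad_div
  · rintro _ ⟨ℓ, hℓ, -, rfl⟩
    exact rpow_neg_inv_le_NSW_div (by positivity) (prod_pos fun i _ => hℓ i)
      (prod_le_factorial_mul_prod_Hvec fun i => (hℓ i).le)
  · exact ⟨geomLoad n x, geomLoad_pos hx.1, monotone_geomLoad hx.1.le hx.2, rfl⟩
  · rintro _ ⟨m, E, -, hopt, rfl⟩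
    have hE := isOpt_optLoad_of_NSW_pos hn hopt
    obtain ⟨y, hy, hw⟩ := exists_isWFAlloc_wfLoad_eq E
    rw [hw]
    exact rpow_neg_inv_le_NSW_div (by positivity)
      (prod_pos_of_NSW_pos hn (nonneg_of_mem_loads hE.1) hopt) (hy.prod_le_factorial_mul hE)
  · refine ⟨n, nestedReqSeq n x hx.1,
      sum_pos (fun t _ => geomLoad_pos hx.1 t) ⟨⟨0, hn⟩, mem_univ _⟩, ?_,
      by rw [wfLoad_nestedReqSeq, NSW_optLoad_nestedReqSeq hx.1 hx.2]⟩
    rw [NSW_optLoad_nestedReqSeq hx.1 hx.2]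
    exact Real.rpow_pos_of_pos (prod_pos fun i _ => geomLoad_pos hx.1 i) _
end
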